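/- arXiv:1805.06865 — 3 statements merged into one kernel-verified Lean document; each statement's English description precedes it below -/
import Mathlib

section
/- Suppose Π_J and Π_K are sets of pairs (P, E) with P ∈ [0,1], E ≥ 0, both containing (0,0), and for jobs J and K define V_J(r) = sup_{(P,E)∈Π_J} (rP − E) and V_K(r) = sup_{(P,E)∈Π_K} (rP − E). If the policy set of the sequential composition J▷K is Π_J × Π_K with completion probability P_J·P_K and expected service time E_J + P_J·E_K, then its SJP function satisfies V_{J▷K}(r) = V_J(V_K(r)) for all r ≥ 0. -/
open Set

theorem sjp_composition_law
    (PiJ PiK : Set (ℝ × ℝ))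
    (hJ : ∀ p ∈ PiJ, p.1 ∈ Set.Icc (0 : ℝ) 1 ∧ 0 ≤ p.2)
    (hK : ∀ p ∈ PiK, p.1 ∈ Set.Icc (0 : ℝ) 1 ∧ 0 ≤ p.2)
    (hJ0 : ((0 : ℝ), (0 : ℝ)) ∈ PiJ) (hK0 : ((0 : ℝ), (0 : ℝ)) ∈ PiK)
    (VJ VK VJK : ℝ → ℝ)
    (hVJ : ∀ r, VJ r = sSup ((fun p : ℝ × ℝ => r * p.1 - p.2) '' PiJ))
    (hVK : ∀ r, VK r = sSup ((fun p : ℝ × ℝ => r * p.1 - p.2) '' PiK))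
    (hVJK : ∀ r, VJK r =
      sSup ((fun q : (ℝ × ℝ) × (ℝ × ℝ) =>
        r * (q.1.1 * q.2.1) - (q.1.2 + q.1.1 * q.2.2)) '' (PiJ ×ˢ PiK))) :
    ∀ r ≥ (0 : ℝ), VJK r = VJ (VK r) := by
  intro r hr
  set SK := (fun p : ℝ × ℝ => r * p.1 - p.2) '' PiK with hSK
  -- SK bounded above by r
  have hSKbdd : BddAbove SK := by
    refine ⟨r, ?_⟩
    rintro x ⟨⟨P, E⟩, hmem, rfl⟩
    obtain ⟨⟨hP0, hP1⟩, hE⟩ := hK _ hmem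
    have : r * P ≤ r := by nlinarith
    simp only; linarith
  have hSKne : SK.Nonempty := ⟨0, ⟨(0, 0), hK0, by simp⟩⟩
  set s := VK r with hs
  have hsSup : s = sSup SK := hVK r
  have hs0 : 0 ≤ s := by
    rw [hsSup]
    have := le_csSup hSKbdd (show (0:ℝ) ∈ SK from ⟨(0,0), hK0, by simp⟩)
    linarith
  have hsle : ∀ p ∈ PiK, r * p.1 - p.2 ≤ s := by
    intro p hp
    rw [hsSup]
    exact le_csSup hSKbdd ⟨p, hp, rfl⟩
  set SJ := (fun p : ℝ × ℝ => s * p.1 - p.2) '' PiJ with hSJ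
  have hSJbdd : BddAbove SJ := by
    refine ⟨s, ?_⟩
    rintro x ⟨⟨P, E⟩, hmem, rfl⟩
    obtain ⟨⟨hP0, hP1⟩, hE⟩ := hJ _ hmem
    have : s * P ≤ s := by nlinarith
    simp only; linarith
  set SJK := (fun q : (ℝ × ℝ) × (ℝ × ℝ) =>
        r * (q.1.1 * q.2.1) - (q.1.2 + q.1.1 * q.2.2)) '' (PiJ ×ˢ PiK) with hSJKdef
  have hSJKbdd : BddAbove SJK := by
    refine ⟨r, ?_⟩
    rintro x ⟨⟨⟨P1, E1⟩, ⟨P2, E2⟩⟩, ⟨h1, h2⟩, rfl⟩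
    obtain ⟨⟨h10, h11⟩, hE1⟩ := hJ _ h1
    obtain ⟨⟨h20, h21⟩, hE2⟩ := hK _ h2
    simp only at *
    have hP : P1 * P2 ≤ 1 := by nlinarith
    have hc : 0 ≤ E1 + P1 * E2 := by nlinarith [mul_nonneg h10 hE2]
    nlinarith [mul_nonneg hr (sub_nonneg.2 hP)]
  have hSJKle : ∀ x ∈ SJK, x ≤ VJK r := by
    intro x hx
    rw [hVJK r]
    exact le_csSup hSJKbdd hx
  rw [hVJK r, hVJ s]
  apply le_antisymm
  · apply csSup_le
    · exact ⟨0, ⟨((0,0),(0,0)), ⟨hJ0, hK0⟩, by simp⟩⟩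
    · rintro x ⟨⟨⟨P1, E1⟩, ⟨P2, E2⟩⟩, ⟨h1, h2⟩, rfl⟩
      obtain ⟨⟨h10, h11⟩, hE1⟩ := hJ _ h1
      have hK2 := hsle _ h2
      simp only at hK2 ⊢
      have h1' : r * (P1 * P2) - (E1 + P1 * E2) ≤ s * P1 - E1 := by nlinarith
      have h2' : s * P1 - E1 ≤ sSup SJ := le_csSup hSJbdd ⟨(P1, E1), h1, rfl⟩
      linarith
  · apply csSup_le
    · exact ⟨0, ⟨(0,0), hJ0, by simp⟩⟩
    · rintro x ⟨⟨P1, E1⟩, h1, rfl⟩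
      simp only
      obtain ⟨⟨h10, h11⟩, hE1⟩ := hJ _ h1
      rcases eq_or_lt_of_le h10 with h | h
      · have h0mem : (0:ℝ) ∈ SJK := ⟨((0,0),(0,0)), ⟨hJ0, hK0⟩, by simp⟩
        have h0le : (0:ℝ) ≤ sSup SJK := le_csSup hSJKbdd h0mem
        have hP1 : P1 = 0 := by simpa using h.symm
        simp only at hE1
        rw [hP1]; simp only [mul_zero, zero_sub]
        linarith
      · have key : s ≤ (sSup SJK + E1) / P1 := by
          rw [hsSup]
          apply csSup_le hSKne
          rintro x ⟨⟨P2, E2⟩, h2, rfl⟩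
          simp only
          rw [le_div_iff₀ h]
          have : r * (P1 * P2) - (E1 + P1 * E2) ≤ sSup SJK :=
            le_csSup hSJKbdd ⟨((P1,E1),(P2,E2)), ⟨h1, h2⟩, rfl⟩
          nlinarith
        rw [le_div_iff₀ h] at key
        nlinarith
end

section
/- Let V_J and V_K be SJP functions (continuous, convex, nondecreasing, V(0)=0, V(r)≤r, strictly increasing above their respective indices τ_J, τ_K). If V_{J▷K} = V_J ∘ V_K, then the SJP index of the composition satisfies τ_{J▷K} = V_K^{-1}(τ_J), where V_K^{-1}(u) for u ≥ 0 denotes sup{r : V_K(r) ≤ u}. -/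
open Set

theorem sjp_index_of_composition
    (VJ VK : ℝ → ℝ) (τJ τK : ℝ)
    (hJcont : ContinuousOn VJ (Set.Ici (0 : ℝ)))
    (hJconv : ConvexOn ℝ (Set.Ici (0 : ℝ)) VJ)
    (hJmono : MonotoneOn VJ (Set.Ici (0 : ℝ)))
    (hJ0 : VJ 0 = 0) (hJle : ∀ r ≥ (0 : ℝ), VJ r ≤ r)
    (hτJ : τJ = sSup {r : ℝ | 0 ≤ r ∧ VJ r = 0})
    (hJstrict : StrictMonoOn VJ (Set.Ici τJ))
    (hKcont : ContinuousOn VK (Set.Ici (0 : ℝ)))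
    (hKconv : ConvexOn ℝ (Set.Ici (0 : ℝ)) VK)
    (hKmono : MonotoneOn VK (Set.Ici (0 : ℝ)))
    (hK0 : VK 0 = 0) (hKle : ∀ r ≥ (0 : ℝ), VK r ≤ r)
    (hτK : τK = sSup {r : ℝ | 0 ≤ r ∧ VK r = 0})
    (hKstrict : StrictMonoOn VK (Set.Ici τK))
    (hKsurj : ∀ u ≥ (0 : ℝ), ∃ r ≥ (0 : ℝ), VK r = u)
    (VJK : ℝ → ℝ) (hcomp : ∀ r, VJK r = VJ (VK r)) :
    sSup {r : ℝ | 0 ≤ r ∧ VJK r = 0} = sSup {r : ℝ | 0 ≤ r ∧ VK r ≤ τJ} := by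
  have hJnonneg : ∀ r ≥ (0:ℝ), 0 ≤ VJ r := fun r hr => by
    have := hJmono (Set.mem_Ici.2 le_rfl) hr hr
    simpa [hJ0] using this
  have hKnonneg : ∀ r ≥ (0:ℝ), 0 ≤ VK r := fun r hr => by
    have := hKmono (Set.mem_Ici.2 le_rfl) hr hr
    simpa [hK0] using this
  have hZne : ({r : ℝ | 0 ≤ r ∧ VJ r = 0}).Nonempty := ⟨0, le_rfl, hJ0⟩
  have hbdd : BddAbove {r : ℝ | 0 ≤ r ∧ VJ r = 0} := by
    by_contra h
    have hτ0 : τJ = 0 := by rw [hτJ, Real.sSup_of_not_bddAbove h]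
    obtain ⟨z, hzS, hz1⟩ := not_bddAbove_iff.mp h 1
    have h0m : (0:ℝ) ∈ Set.Ici τJ := by rw [hτ0]; exact Set.mem_Ici.2 le_rfl
    have hzm : z ∈ Set.Ici τJ := by rw [hτ0]; exact hzS.1
    have := hJstrict h0m hzm (lt_trans one_pos hz1)
    rw [hJ0, hzS.2] at this
    exact lt_irrefl 0 this
  have hclosed : IsClosed {r : ℝ | 0 ≤ r ∧ VJ r = 0} := by
    have hset : {r : ℝ | 0 ≤ r ∧ VJ r = 0} = Set.Ici 0 ∩ VJ ⁻¹' {0} := by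
      ext r; simp [Set.mem_Ici]
    rw [hset]
    exact hJcont.preimage_isClosed_of_isClosed isClosed_Ici isClosed_singleton
  have hmem : τJ ∈ {r : ℝ | 0 ≤ r ∧ VJ r = 0} := hτJ ▸ hclosed.csSup_mem hZne hbdd
  have hτJnonneg : (0:ℝ) ≤ τJ := hmem.1
  have hVJτJ : VJ τJ = 0 := hmem.2
  have hiff : ∀ u ≥ (0:ℝ), (VJ u = 0 ↔ u ≤ τJ) := by
    intro u hu
    constructor
    · intro h
      rw [hτJ]
      exact le_csSup hbdd ⟨hu, h⟩
    · intro h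
      have h1 : VJ u ≤ VJ τJ := hJmono hu hτJnonneg h
      rw [hVJτJ] at h1
      exact le_antisymm h1 (hJnonneg u hu)
  have hseteq : {r : ℝ | 0 ≤ r ∧ VJK r = 0} = {r : ℝ | 0 ≤ r ∧ VK r ≤ τJ} := by
    ext r
    simp only [Set.mem_setOf_eq, hcomp]
    exact and_congr_right fun hr => hiff (VK r) (hKnonneg r hr)
  rw [hseteq]
end

section
/- Let d > 0 and define V_i(r) = max{0, r − d} (the SJP function of a single deterministic stage of size d). Let V_J be an SJP function: continuous, convex, nondecreasing, V_J(0) = 0, V_J(r) ≤ r, with index τ_J = sup{r : V_J(r) = 0}, and assume V_J is strictly increasing on [τ_J, ∞). Then the index of J▷i equals V_J^{-1}(d) (the unique r ≥ τ_J with V_J(r) = d), the index of i▷J equals τ_J + d, and V_J^{-1}(d) ≥ τ_J + d. -/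
open Set

theorem prioritize_variable_stages
    (d : ℝ) (hd : 0 < d)
    (Vi : ℝ → ℝ) (hVi : ∀ r, Vi r = max 0 (r - d))
    (VJ : ℝ → ℝ) (τJ : ℝ)
    (hJcont : ContinuousOn VJ (Set.Ici (0 : ℝ)))
    (hJconv : ConvexOn ℝ (Set.Ici (0 : ℝ)) VJ)
    (hJmono : MonotoneOn VJ (Set.Ici (0 : ℝ)))
    (hJ0 : VJ 0 = 0) (hJle : ∀ r ≥ (0 : ℝ), VJ r ≤ r)
    (hτJ : τJ = sSup {r : ℝ | 0 ≤ r ∧ VJ r = 0})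
    (hJstrict : StrictMonoOn VJ (Set.Ici τJ))
    (rstar : ℝ) (hrstar : τJ ≤ rstar) (hVrstar : VJ rstar = d) :
    sSup {r : ℝ | 0 ≤ r ∧ Vi (VJ r) = 0} = rstar ∧
    sSup {r : ℝ | 0 ≤ r ∧ VJ (Vi r) = 0} = τJ + d ∧
    τJ + d ≤ rstar := by
  -- rstar ≥ 0
  have hrstar0 : (0 : ℝ) ≤ rstar := by
    by_contra h
    push_neg at h
    have h0 : (0 : ℝ) ∈ Set.Ici τJ := le_trans hrstar h.le
    have := hJstrict (Set.mem_Ici.mpr hrstar) h0 h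
    rw [hJ0, hVrstar] at this
    linarith
  -- the zero set S
  set S : Set ℝ := {r : ℝ | 0 ≤ r ∧ VJ r = 0} with hS
  have h0S : (0 : ℝ) ∈ S := ⟨le_refl 0, hJ0⟩
  have hSbdd : BddAbove S := by
    refine ⟨rstar, fun r hr => ?_⟩
    by_contra hc
    push_neg at hc
    have := hJmono (Set.mem_Ici.mpr hrstar0) (Set.mem_Ici.mpr hr.1) hc.le
    rw [hVrstar, hr.2] at this
    linarith
  have hτ0 : 0 ≤ τJ := by
    rw [hτJ]; exact le_csSup hSbdd h0S
  have hSclosed : IsClosed S := by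
    have : S = Set.Ici (0 : ℝ) ∩ VJ ⁻¹' {0} := by
      ext r; simp [hS, Set.mem_setOf_eq, and_comm]
    rw [this]
    exact hJcont.preimage_isClosed_of_isClosed isClosed_Ici isClosed_singleton
  have hVτ : VJ τJ = 0 := by
    have : τJ ∈ S := by
      rw [hτJ]; exact hSclosed.csSup_mem ⟨0, h0S⟩ hSbdd
    exact this.2
  -- characterization of the zero set
  have hzero : ∀ x : ℝ, 0 ≤ x → (VJ x = 0 ↔ x ≤ τJ) := by
    intro x hx
    constructor
    · intro hvx
      by_contra hc
      push_neg at hc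
      have := hJstrict (Set.mem_Ici.mpr (le_refl τJ)) (Set.mem_Ici.mpr hc.le) hc
      rw [hVτ, hvx] at this; linarith
    · intro hle
      have h1 := hJmono (Set.mem_Ici.mpr (le_refl 0)) (Set.mem_Ici.mpr hx) hx
      have h2 := hJmono (Set.mem_Ici.mpr hx) (Set.mem_Ici.mpr hτ0) hle
      rw [hJ0] at h1; rw [hVτ] at h2
      linarith
  -- Part 1
  have part1 : sSup {r : ℝ | 0 ≤ r ∧ Vi (VJ r) = 0} = rstar := by
    have hA : ∀ r : ℝ, (0 ≤ r ∧ Vi (VJ r) = 0) ↔ (0 ≤ r ∧ VJ r ≤ d) := by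
      intro r
      rw [hVi]
      constructor
      · rintro ⟨h1, h2⟩
        refine ⟨h1, ?_⟩
        by_contra hc
        push_neg at hc
        have : max 0 (VJ r - d) = VJ r - d := max_eq_right (by linarith)
        rw [this] at h2; linarith
      · rintro ⟨h1, h2⟩
        exact ⟨h1, max_eq_left (by linarith)⟩
    have hub : ∀ r ∈ {r : ℝ | 0 ≤ r ∧ Vi (VJ r) = 0}, r ≤ rstar := by
      intro r hr
      rw [Set.mem_setOf_eq, hA] at hr
      by_contra hc
      push_neg at hc
      have := hJstrict (Set.mem_Ici.mpr hrstar) (Set.mem_Ici.mpr (le_trans hrstar hc.le)) hc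
      rw [hVrstar] at this
      linarith [hr.2]
    have hmem : rstar ∈ {r : ℝ | 0 ≤ r ∧ Vi (VJ r) = 0} := by
      rw [Set.mem_setOf_eq, hA]
      exact ⟨hrstar0, le_of_eq hVrstar⟩
    exact le_antisymm (csSup_le ⟨rstar, hmem⟩ hub) (le_csSup ⟨rstar, hub⟩ hmem)
  -- Part 2
  have part2 : sSup {r : ℝ | 0 ≤ r ∧ VJ (Vi r) = 0} = τJ + d := by
    have hB : ∀ r : ℝ, (0 ≤ r ∧ VJ (Vi r) = 0) ↔ (0 ≤ r ∧ r ≤ τJ + d) := by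
      intro r
      rw [hVi]
      have hVir : (0 : ℝ) ≤ max 0 (r - d) := le_max_left _ _
      rw [hzero _ hVir]
      constructor
      · rintro ⟨h1, h2⟩
        exact ⟨h1, by linarith [le_trans (le_max_right 0 (r - d)) h2]⟩
      · rintro ⟨h1, h2⟩
        exact ⟨h1, max_le hτ0 (by linarith)⟩
    have hub : ∀ r ∈ {r : ℝ | 0 ≤ r ∧ VJ (Vi r) = 0}, r ≤ τJ + d := by
      intro r hr
      rw [Set.mem_setOf_eq, hB] at hr
      exact hr.2
    have hmem : τJ + d ∈ {r : ℝ | 0 ≤ r ∧ VJ (Vi r) = 0} := by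
      rw [Set.mem_setOf_eq, hB]
      exact ⟨by linarith, le_refl _⟩
    exact le_antisymm (csSup_le ⟨_, hmem⟩ hub) (le_csSup ⟨_, hub⟩ hmem)
  -- Part 3 : VJ (τJ + d) ≤ d via convexity (1-Lipschitz bound)
  have hkey : VJ (τJ + d) ≤ d := by
    by_contra hc
    push_neg at hc
    set c : ℝ := VJ (τJ + d) with hcdef
    have hcd : 0 < c - d := by linarith
    set R : ℝ := c * τJ / (c - d) + τJ + d + 1 with hR
    have hRpos : τJ + d < R := by
      have : 0 ≤ c * τJ / (c - d) := div_nonneg (mul_nonneg (by linarith) hτ0) hcd.le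
      rw [hR]; linarith
    have hR0 : 0 ≤ R := by linarith
    have hsec := hJconv.secant_mono (a := τJ) (x := τJ + d) (y := R)
      (Set.mem_Ici.mpr hτ0) (Set.mem_Ici.mpr (by linarith)) (Set.mem_Ici.mpr (by linarith))
      (by linarith) (by linarith) hRpos.le
    rw [hVτ] at hsec
    have hd1 : ((τJ + d) - τJ : ℝ) = d := by ring
    rw [hd1] at hsec
    -- hsec : (c - 0)/d ≤ (VJ R - 0)/(R - τJ)
    have hRτ : 0 < R - τJ := by linarith
    have hVR : VJ R ≤ R := hJle R hR0
    have h1 : (c - 0) / d ≤ (R - 0) / (R - τJ) := by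
      refine le_trans hsec ?_
      gcongr
    have h2 : c * (R - τJ) ≤ R * d := by
      have := (div_le_div_iff₀ hd hRτ).mp h1
      linarith
    have h3 : (c - d) * R ≤ c * τJ := by nlinarith
    have h4 : R ≤ c * τJ / (c - d) := (le_div_iff₀ hcd).mpr (by linarith)
    rw [hR] at h4
    linarith
  refine ⟨part1, part2, ?_⟩
  by_contra hc
  push_neg at hc
  have := hJstrict (Set.mem_Ici.mpr hrstar) (Set.mem_Ici.mpr (by linarith)) hc
  rw [hVrstar] at this
  linarith
end
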